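/- Suppose that C is not a product of d linear forms over the algebraic closure of F_q (equivalently, it is not the case that exactly one of η(e0), η(e1), η(e2) is -1 with the other two e's zero). Then a nonzero linear form ℓ ∈ F_q[X0,X1,X2] divides C if and only if there is a choice of indices {i, j, k} = {0, 1, 2} with η(-e_i·e_j) = -1 and η(e_k) = -1 such that ℓ is a nonzero scalar multiple of e_i·X_i + e_j·X_j. -/

import Mathlib

/-!
Write `η(u) = u ^ d`, which takes values in `{0, 1, -1}`; when the characteristic is not `2` or `3`,
a sum `η(x) + η(y) + η(z)` with `x ≠ 0` vanishes only if one of `y, z` is `0` and the other has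
`η = -η(x)`.

If `ℓ = ∑ vₘ Xₘ` divides `C`, then `C` vanishes on the `F`-points of the plane `ℓ = 0`. Choose a
pivot `v_k ≠ 0` and evaluate `C` at the points `(v_k, 0, -v_i)` and `(0, v_k, -v_j)` (coordinates
ordered as `i, j, k`). The first forces either `v_i = 0` and `η(e_i) = -1`, or `e_i v_k = e_k v_i`
and `η(-v_i v_k) = -1`; the second forces the same with `j` in place of `i`. The points
`(1, 1, 0)` and `(v_k, v_k, -v_i - v_j)` exclude the cases where both give the same alternative;
each remaining case makes `ℓ` proportional to `e_j X_j + e_k X_k` or to `e_i X_i + e_k X_k`.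

Conversely, for `L = α x + β y` with `η(-α β) = η(γ) = -1`, the sum `x ^ d + y ^ d` is the unit
`β ^ d` times `(β y) ^ d - (-α x) ^ d`, the sum `z ^ d + (γ z) ^ d` is zero, and `L` divides
`(L + γ z) ^ d - (γ z) ^ d`.
-/

open MvPolynomial

/-- The polynomial `C = X0^d + X1^d + X2^d + (e0·X0 + e1·X1 + e2·X2)^d` over `F_q`. -/
noncomputable def fermatSlice (F : Type) [Field F] (d : ℕ) (e0 e1 e2 : F) :
    MvPolynomial (Fin 3) F :=
  X 0 ^ d + X 1 ^ d + X 2 ^ d +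
    (MvPolynomial.C e0 * X 0 + MvPolynomial.C e1 * X 1 + MvPolynomial.C e2 * X 2) ^ d

theorem Fin.sum_univ_three_of_ne {M : Type*} [AddCommMonoid M] {i j k : Fin 3}
    (hij : i ≠ j) (hik : i ≠ k) (hjk : j ≠ k) (f : Fin 3 → M) :
    ∑ m, f m = f i + f j + f k := by
  have hi : i ∉ ({j, k} : Finset (Fin 3)) := by simp [hij, hik]
  have huniv : ({i, j, k} : Finset (Fin 3)) = Finset.univ :=
    Finset.eq_univ_of_card _ (by rw [Finset.card_insert_of_notMem hi, Finset.card_pair hjk]; rfl)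
  rw [← huniv, Finset.sum_insert hi, Finset.sum_pair hjk, add_assoc]

theorem MvPolynomial.IsHomogeneous.exists_eq_sum_C_mul_X {σ R : Type*} [Fintype σ]
    [CommSemiring R] {ℓ : MvPolynomial σ R} (h : ℓ.IsHomogeneous 1) :
    ∃ v : σ → R, ℓ = ∑ i, C (v i) * X i := by
  have hℓ : ℓ ∈ homogeneousSubmodule σ R 1 := h
  rw [homogeneousSubmodule_one_eq_span_X, Submodule.mem_span_range_iff_exists_fun] at hℓ
  obtain ⟨v, hv⟩ := hℓ
  exact ⟨v, by simp only [← hv, C_mul']⟩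

theorem add_mul_dvd_pow_add_pow_add_pow_add_pow {R : Type*} [CommRing R] {d : ℕ} {α β γ : R}
    (hβ : β ^ d * β ^ d = 1) (hαβ : (-(α * β)) ^ d = -1) (hγ : γ ^ d = -1) (x y z : R) :
    α * x + β * y ∣ x ^ d + y ^ d + z ^ d + (α * x + β * y + γ * z) ^ d := by
  have hxy : α * x + β * y ∣ x ^ d + y ^ d := by
    have h := sub_dvd_pow_sub_pow (β * y) (-α * x) d
    rw [show β * y - -α * x = α * x + β * y by ring] at h
    have : x ^ d + y ^ d = β ^ d * ((β * y) ^ d - (-α * x) ^ d) := by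
      linear_combination (-y ^ d) * hβ + x ^ d * hαβ
    exact this ▸ dvd_mul_of_dvd_right h _
  have hz : α * x + β * y ∣ (α * x + β * y + γ * z) ^ d - (γ * z) ^ d := by
    simpa using sub_dvd_pow_sub_pow (α * x + β * y + γ * z) (γ * z) d
  have : x ^ d + y ^ d + z ^ d + (α * x + β * y + γ * z) ^ d =
      (x ^ d + y ^ d) + ((α * x + β * y + γ * z) ^ d - (γ * z) ^ d) := by
    linear_combination z ^ d * hγ
  exact this ▸ dvd_add hxy hz

namespace FiniteField

variable {F : Type*} [Field F] [Fintype F] {d : ℕ}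

theorem natCast_ne_zero_of_card_eq_prime_pow {p h : ℕ} (hp : p.Prime)
    (hcard : Fintype.card F = p ^ h) {n : ℕ} (hn0 : 0 < n) (hn : n < p) : (n : F) ≠ 0 := by
  have : Fact p.Prime := ⟨hp⟩
  have : CharP F p := charP_of_card_eq_prime_pow hcard
  rw [ne_eq, CharP.cast_eq_zero_iff F p]
  exact Nat.not_dvd_of_pos_of_lt hn0 hn

theorem ne_zero_of_card_eq_two_mul_add_one (hq : Fintype.card F = 2 * d + 1) : d ≠ 0 := by
  rintro rfl
  have := Fintype.one_lt_card (α := F)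
  omega

theorem pow_mul_pow_of_card_eq_two_mul_add_one (hq : Fintype.card F = 2 * d + 1) {u : F}
    (hu : u ≠ 0) : u ^ d * u ^ d = 1 := by
  rw [← pow_add, ← two_mul, ← Nat.add_sub_cancel (2 * d) 1, ← hq]
  exact pow_card_sub_one_eq_one u hu

theorem pow_eq_zero_or_one_or_neg_one (hq : Fintype.card F = 2 * d + 1) (u : F) :
    u ^ d = 0 ∨ u ^ d = 1 ∨ u ^ d = -1 := by
  rcases eq_or_ne u 0 with rfl | hu
  · exact Or.inl (zero_pow (ne_zero_of_card_eq_two_mul_add_one hq))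
  · exact Or.inr (mul_self_eq_one_iff.mp (pow_mul_pow_of_card_eq_two_mul_add_one hq hu))

theorem mul_sq_pow_of_card_eq_two_mul_add_one (hq : Fintype.card F = 2 * d + 1) (x : F) {u : F}
    (hu : u ≠ 0) : (x * u ^ 2) ^ d = x ^ d := by
  rw [mul_pow, ← pow_mul, mul_comm 2 d, pow_mul, sq, pow_mul_pow_of_card_eq_two_mul_add_one hq hu,
    mul_one]

theorem eq_zero_of_pow_add_pow_add_pow_eq_zero (hq : Fintype.card F = 2 * d + 1) (h2 : (2 : F) ≠ 0)
    (h3 : (3 : F) ≠ 0) {x y z : F} (hx : x ≠ 0) (h : x ^ d + y ^ d + z ^ d = 0) :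
    (y = 0 ∧ z ^ d = -x ^ d) ∨ (z = 0 ∧ y ^ d = -x ^ d) := by
  have hd := ne_zero_of_card_eq_two_mul_add_one hq
  rw [← pow_eq_zero_iff hd, ← pow_eq_zero_iff (a := z) hd]
  have hx' := (pow_eq_zero_or_one_or_neg_one hq x).resolve_left (pow_ne_zero d hx)
  rcases hx' with hx' | hx' <;> rcases pow_eq_zero_or_one_or_neg_one hq y with hy | hy | hy <;>
    rcases pow_eq_zero_or_one_or_neg_one hq z with hz | hz | hz <;>
    rw [hx', hy, hz] at h ⊢ <;>
    first
      | (left; constructor <;> ring1)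
      | (right; constructor <;> ring1)
      | exact absurd (by linear_combination h) (one_ne_zero (α := F))
      | exact absurd (by linear_combination -h) (one_ne_zero (α := F))
      | exact absurd (by linear_combination h) h2
      | exact absurd (by linear_combination -h) h2
      | exact absurd (by linear_combination h) h3
      | exact absurd (by linear_combination -h) h3

theorem neg_mul_pow_eq_neg_one_of_mul_eq (hq : Fintype.card F = 2 * d + 1) {b c e₂ e₃ : F}
    (hc : c ≠ 0) (he₃ : e₃ ≠ 0) (h : e₂ * c = e₃ * b) (hbc : (-(b * c)) ^ d = -1) :
    (-(e₂ * e₃)) ^ d = -1 ∧ ∃ t ≠ 0, b = t * e₂ ∧ c = t * e₃ := by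
  have hsq : -(e₂ * e₃) = -(b * c) * (e₃ / c) ^ 2 := by
    field_simp
    linear_combination -h
  refine ⟨by rw [hsq, mul_sq_pow_of_card_eq_two_mul_add_one hq _ (div_ne_zero he₃ hc), hbc],
    c / e₃, div_ne_zero hc he₃, ?_, ?_⟩
  · field_simp
    linear_combination -h
  · field_simp

end FiniteField

-- Coordinates in an arbitrary order, so that one analysis serves every choice of pivot.
def VanishesOnPlane {F : Type*} [CommRing F] (d : ℕ) (a b c e₁ e₂ e₃ : F) : Prop :=
  ∀ x y z : F, a * x + b * y + c * z = 0 →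
    x ^ d + y ^ d + z ^ d + (e₁ * x + e₂ * y + e₃ * z) ^ d = 0

namespace VanishesOnPlane

open FiniteField

variable {F : Type*} [Field F] {d : ℕ} {a b c e₁ e₂ e₃ : F}

theorem swap (hS : VanishesOnPlane d a b c e₁ e₂ e₃) : VanishesOnPlane d b a c e₂ e₁ e₃ :=
  fun x y z h => by
    linear_combination hS y x z (by linear_combination h)

variable [Fintype F]

theorem false_of_eq_zero (hq : Fintype.card F = 2 * d + 1) (h2 : (2 : F) ≠ 0)
    (h3 : (3 : F) ≠ 0) (hS : VanishesOnPlane d 0 0 c e₁ e₂ e₃) : False := by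
  have h := hS 1 1 0 (by ring)
  rw [zero_pow (ne_zero_of_card_eq_two_mul_add_one hq), add_zero] at h
  rcases eq_zero_of_pow_add_pow_add_pow_eq_zero hq h2 h3 one_ne_zero h with ⟨h1, -⟩ | ⟨-, h1⟩
  · exact one_ne_zero h1
  · exact h2 (by linear_combination h1)

theorem eq_zero_or_mul_eq (hq : Fintype.card F = 2 * d + 1) (h2 : (2 : F) ≠ 0)
    (h3 : (3 : F) ≠ 0) (hc : c ≠ 0) (hS : VanishesOnPlane d a b c e₁ e₂ e₃) :
    (a = 0 ∧ e₁ ^ d = -1) ∨ (e₁ * c = e₃ * a ∧ (-(a * c)) ^ d = -1) := by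
  have hd := ne_zero_of_card_eq_two_mul_add_one hq
  have hcd := pow_mul_pow_of_card_eq_two_mul_add_one hq hc
  have h := hS c 0 (-a) (by ring)
  rw [zero_pow hd, add_zero, show e₁ * c + e₂ * 0 + e₃ * -a = e₁ * c - e₃ * a by ring] at h
  rcases eq_zero_of_pow_add_pow_add_pow_eq_zero hq h2 h3 hc h with
    ⟨ha, he⟩ | ⟨he, ha⟩
  · refine Or.inl ⟨neg_eq_zero.mp ha, ?_⟩
    rw [neg_eq_zero.mp ha, mul_zero, sub_zero, mul_pow] at he
    linear_combination c ^ d * he - (e₁ ^ d + 1) * hcd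
  · refine Or.inr ⟨sub_eq_zero.mp he, ?_⟩
    rw [neg_mul_eq_neg_mul, mul_pow, ha]
    linear_combination -hcd

theorem false_of_mul_eq (hq : Fintype.card F = 2 * d + 1) (h2 : (2 : F) ≠ 0)
    (h3 : (3 : F) ≠ 0) (hc : c ≠ 0) (ha : e₁ * c = e₃ * a) (hb : e₂ * c = e₃ * b)
    (hS : VanishesOnPlane d a b c e₁ e₂ e₃) : False := by
  have h := hS c c (-(a + b)) (by ring)
  rw [show e₁ * c + e₂ * c + e₃ * -(a + b) = 0 by linear_combination ha + hb,
    zero_pow (ne_zero_of_card_eq_two_mul_add_one hq), add_zero] at h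
  rcases eq_zero_of_pow_add_pow_add_pow_eq_zero hq h2 h3 hc h with ⟨h0, -⟩ | ⟨-, h1⟩
  · exact hc h0
  · have h2c : (2 : F) * c ^ d = 0 := by linear_combination h1
    exact pow_ne_zero d hc ((mul_eq_zero.mp h2c).resolve_left h2)

theorem cases (hq : Fintype.card F = 2 * d + 1) (h2 : (2 : F) ≠ 0) (h3 : (3 : F) ≠ 0)
    (hc : c ≠ 0) (hS : VanishesOnPlane d a b c e₁ e₂ e₃) :
    (a = 0 ∧ e₁ ^ d = -1 ∧ e₂ * c = e₃ * b ∧ (-(b * c)) ^ d = -1) ∨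
      (b = 0 ∧ e₂ ^ d = -1 ∧ e₁ * c = e₃ * a ∧ (-(a * c)) ^ d = -1) := by
  rcases hS.eq_zero_or_mul_eq hq h2 h3 hc with ⟨rfl, he₁⟩ | ⟨ha, hac⟩ <;>
    rcases hS.swap.eq_zero_or_mul_eq hq h2 h3 hc with ⟨rfl, he₂⟩ | ⟨hb, hbc⟩
  · exact (hS.false_of_eq_zero hq h2 h3).elim
  · exact Or.inl ⟨rfl, he₁, hb, hbc⟩
  · exact Or.inr ⟨rfl, he₂, ha, hac⟩
  · exact (hS.false_of_mul_eq hq h2 h3 hc ha hb).elim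

end VanishesOnPlane

section VectorForm

open FiniteField

variable {F : Type*} [Field F] {d : ℕ} {v e : Fin 3 → F}

theorem vanishesOnPlane_of_forall
    (H : ∀ x : Fin 3 → F, ∑ m, v m * x m = 0 → ∑ m, x m ^ d + (∑ m, e m * x m) ^ d = 0)
    {i j k : Fin 3} (hij : i ≠ j) (hik : i ≠ k) (hjk : j ≠ k) :
    VanishesOnPlane d (v i) (v j) (v k) (e i) (e j) (e k) := by
  intro a b c habc
  let x : Fin 3 → F := fun m => if m = i then a else if m = j then b else c
  have hx : x i = a ∧ x j = b ∧ x k = c := by simp [x, hij.symm, hik.symm, hjk.symm]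
  simpa only [Fin.sum_univ_three_of_ne hij hik hjk, hx] using
    H x (by rwa [Fin.sum_univ_three_of_ne hij hik hjk, hx.1, hx.2.1, hx.2.2])

variable [Fintype F]

theorem exists_pair_of_forall_sum_mul_eq_zero (hq : Fintype.card F = 2 * d + 1) (h2 : (2 : F) ≠ 0)
    (h3 : (3 : F) ≠ 0)
    (hlines : ∀ i j k : Fin 3, i ≠ j → i ≠ k → j ≠ k → e i ^ d = -1 → e j = 0 → e k ≠ 0)
    (H : ∀ x : Fin 3 → F, ∑ m, v m * x m = 0 → ∑ m, x m ^ d + (∑ m, e m * x m) ^ d = 0) :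
    ∃ i j k : Fin 3, i ≠ j ∧ i ≠ k ∧ j ≠ k ∧ (-(e i * e j)) ^ d = -1 ∧ e k ^ d = -1 ∧
      ∃ t ≠ 0, v i = t * e i ∧ v j = t * e j ∧ v k = 0 := by
  by_cases hv : ∀ m, v m = 0
  · have hS := vanishesOnPlane_of_forall H (i := 0) (j := 1) (k := 2) (by decide) (by decide)
      (by decide)
    rw [hv 0, hv 1] at hS
    exact (hS.false_of_eq_zero hq h2 h3).elim
  push Not at hv
  obtain ⟨k, hk⟩ := hv
  obtain ⟨i, j, hij, hik, hjk⟩ : ∃ i j : Fin 3, i ≠ j ∧ i ≠ k ∧ j ≠ k := by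
    fin_cases k <;> decide
  have hne {i j : Fin 3} (hij : i ≠ j) (hik : i ≠ k) (hjk : j ≠ k) (hei : e i ^ d = -1)
      (hj : e j * v k = e k * v j) : e k ≠ 0 :=
    fun hek => hlines i j k hij hik hjk hei
      (by rw [hek, zero_mul] at hj; exact (mul_eq_zero.mp hj).resolve_right hk) hek
  rcases (vanishesOnPlane_of_forall H hij hik hjk).cases hq h2 h3 hk with
    ⟨hvi, hei, hj, hjk'⟩ | ⟨hvj, hej, hi, hik'⟩
  · obtain ⟨hη, t, ht, hvj, hvk⟩ := neg_mul_pow_eq_neg_one_of_mul_eq hq hk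
      (hne hij hik hjk hei hj) hj hjk'
    exact ⟨j, k, i, hjk, hij.symm, hik.symm, hη, hei, t, ht, hvj, hvk, hvi⟩
  · obtain ⟨hη, t, ht, hvi, hvk⟩ := neg_mul_pow_eq_neg_one_of_mul_eq hq hk
      (hne hij.symm hjk hik hej hi) hi hik'
    exact ⟨i, k, j, hik, hij, hjk.symm, hη, hej, t, ht, hvi, hvk, hvj⟩

theorem C_mul_X_add_C_mul_X_dvd (hq : Fintype.card F = 2 * d + 1) {i j k : Fin 3}
    (hij : i ≠ j) (hik : i ≠ k) (hjk : j ≠ k) (hη : (-(e i * e j)) ^ d = -1) (hek : e k ^ d = -1) :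
    C (e i) * X i + C (e j) * X j ∣ ∑ m, X m ^ d + (∑ m, C (e m) * X m) ^ d := by
  rw [Fin.sum_univ_three_of_ne hij hik hjk (fun m => X m ^ d),
    Fin.sum_univ_three_of_ne hij hik hjk (fun m => C (e m) * X m)]
  have hej : e j ≠ 0 := right_ne_zero_of_mul <| neg_ne_zero.mp <|
    ne_zero_pow (ne_zero_of_card_eq_two_mul_add_one hq) (hη ▸ neg_ne_zero.mpr one_ne_zero)
  refine add_mul_dvd_pow_add_pow_add_pow_add_pow ?_ ?_ ?_ _ _ _
  · rw [← map_pow, ← map_mul, pow_mul_pow_of_card_eq_two_mul_add_one hq hej, map_one]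
  · simpa only [map_pow, map_neg, map_mul, map_one] using congrArg (C (σ := Fin 3)) hη
  · simpa only [map_pow, map_neg, map_one] using congrArg (C (σ := Fin 3)) hek

end VectorForm

theorem statement6_general (p h : ℕ) (hp : Nat.Prime p) (hp3 : 3 < p)
    (F : Type) [Field F] [Fintype F] (hcard : Fintype.card F = p ^ h)
    (d : ℕ) (hd : p ^ h = 2 * d + 1) (e0 e1 e2 : F)
    (hNotLines : ¬ ((e0 ^ d = -1 ∧ e1 = 0 ∧ e2 = 0) ∨ (e1 ^ d = -1 ∧ e0 = 0 ∧ e2 = 0) ∨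
      (e2 ^ d = -1 ∧ e0 = 0 ∧ e1 = 0)))
    (ℓ : MvPolynomial (Fin 3) F) (hlin : ℓ.IsHomogeneous 1) :
    ℓ ∣ fermatSlice F d e0 e1 e2 ↔
      ∃ i j k : Fin 3, i ≠ j ∧ i ≠ k ∧ j ≠ k ∧
        (-(![e0, e1, e2] i * ![e0, e1, e2] j)) ^ d = -1 ∧ (![e0, e1, e2] k) ^ d = -1 ∧
        ∃ t : F, t ≠ 0 ∧
          ℓ = MvPolynomial.C t *
            (MvPolynomial.C (![e0, e1, e2] i) * X i +
              MvPolynomial.C (![e0, e1, e2] j) * X j) := by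
  have hq : Fintype.card F = 2 * d + 1 := hcard.trans hd
  have h2 : (2 : F) ≠ 0 := by
    exact_mod_cast FiniteField.natCast_ne_zero_of_card_eq_prime_pow hp hcard two_pos (by omega)
  have h3 : (3 : F) ≠ 0 := by
    exact_mod_cast FiniteField.natCast_ne_zero_of_card_eq_prime_pow hp hcard three_pos hp3
  have hlines : ∀ i j k : Fin 3, i ≠ j → i ≠ k → j ≠ k → ![e0, e1, e2] i ^ d = -1 →
      ![e0, e1, e2] j = 0 → ![e0, e1, e2] k ≠ 0 := by
    intro i j k hij hik hjk hi hj hk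
    fin_cases i <;> fin_cases j <;> fin_cases k <;> simp_all
  obtain ⟨v, rfl⟩ := hlin.exists_eq_sum_C_mul_X
  set e : Fin 3 → F := ![e0, e1, e2]
  have hC : fermatSlice F d e0 e1 e2 = ∑ m, X m ^ d + (∑ m, C (e m) * X m) ^ d := by
    simp [fermatSlice, Fin.sum_univ_three, e]
  constructor
  · rintro ⟨g, hg⟩
    have H (x : Fin 3 → F) (hx : ∑ m, v m * x m = 0) :
        ∑ m, x m ^ d + (∑ m, e m * x m) ^ d = 0 := by
      simpa [hC, hx] using congrArg (eval x) hg
    obtain ⟨i, j, k, hij, hik, hjk, hη, hek, t, ht, hvi, hvj, hvk⟩ :=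
      exists_pair_of_forall_sum_mul_eq_zero hq h2 h3 hlines H
    refine ⟨i, j, k, hij, hik, hjk, hη, hek, t, ht, ?_⟩
    rw [Fin.sum_univ_three_of_ne hij hik hjk, hvi, hvj, hvk, C_mul, C_mul, C_0]
    ring
  · rintro ⟨i, j, k, hij, hik, hjk, hη, hek, t, ht, hℓ⟩
    rw [hℓ, ((IsUnit.mk0 t ht).map C).mul_left_dvd, hC]
    exact C_mul_X_add_C_mul_X_dvd hq hij hik hjk hη hek

/-- Suppose `C` is not a product of `d` linear forms over the algebraic
closure (equivalently, it is not the case that exactly one of `η(e0), η(e1), η(e2)` is `-1`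
with the other two `e`'s zero).  Then a nonzero linear form `ℓ` divides `C` if and only if
there are indices `{i,j,k} = {0,1,2}` with `η(-e_i·e_j) = -1` and `η(e_k) = -1` such that
`ℓ` is a nonzero scalar multiple of `e_i·X_i + e_j·X_j`. -/
theorem statement6 (p h : ℕ) (hp : Nat.Prime p) (hp3 : 3 < p) (hh : 0 < h)
    (F : Type) [Field F] [Fintype F] (hcard : Fintype.card F = p ^ h)
    (d : ℕ) (hd : p ^ h = 2 * d + 1) (e0 e1 e2 : F)
    (hNotLines : ¬ ((e0 ^ d = -1 ∧ e1 = 0 ∧ e2 = 0) ∨ (e1 ^ d = -1 ∧ e0 = 0 ∧ e2 = 0) ∨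
      (e2 ^ d = -1 ∧ e0 = 0 ∧ e1 = 0)))
    (ℓ : MvPolynomial (Fin 3) F) (hl0 : ℓ ≠ 0) (hlin : ℓ.IsHomogeneous 1) :
    ℓ ∣ fermatSlice F d e0 e1 e2 ↔
      ∃ i j k : Fin 3, i ≠ j ∧ i ≠ k ∧ j ≠ k ∧
        (-(![e0, e1, e2] i * ![e0, e1, e2] j)) ^ d = -1 ∧ (![e0, e1, e2] k) ^ d = -1 ∧
        ∃ t : F, t ≠ 0 ∧
          ℓ = MvPolynomial.C t *
            (MvPolynomial.C (![e0, e1, e2] i) * X i +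
              MvPolynomial.C (![e0, e1, e2] j) * X j) :=
  statement6_general p h hp hp3 F hcard d hd e0 e1 e2 hNotLines ℓ hlin
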